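/- Let Λ and H be countable discrete groups with Λ having at least two elements. Then the wreath product Λ ≀ H is maximally almost periodic if and only if Λ is maximally almost periodic, H is residually finite, and either H is finite or Λ is abelian. -/

import Mathlib

universe u v w

/-- Conjugation by `g` as a homomorphism of a normal subgroup `N`: `n ↦ g⁻¹ n g`. -/
def conjHom {G : Type u} [Group G] {N : Subgroup G} (hN : N.Normal) (g : G) : N →* N where
  toFun n := ⟨g⁻¹ * (n : G) * g, by simpa using hN.conj_mem (n : G) n.2 g⁻¹⟩
  map_one' := by ext; simp
  map_mul' a b := by ext; simp [mul_assoc]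

/-- The conjugate representation `σ^g`, `σ^g(n) = σ(g⁻¹ n g)`. -/
def conjRep {G : Type u} [Group G] {N : Subgroup G} (hN : N.Normal) {m : ℕ}
    (σ : N →* Matrix.unitaryGroup (Fin m) ℂ) (g : G) : N →* Matrix.unitaryGroup (Fin m) ℂ :=
  σ.comp (conjHom hN g)

/-- Unitary equivalence of two finite-dimensional unitary representations. -/
def UnitarilyEquiv {G : Type u} [Group G] {m : ℕ}
    (σ τ : G →* Matrix.unitaryGroup (Fin m) ℂ) : Prop :=
  ∃ V : Matrix.unitaryGroup (Fin m) ℂ, ∀ g : G, τ g = V * σ g * V⁻¹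

/-- Irreducibility of a finite-dimensional unitary representation. -/
def IsIrreducibleRep {G : Type u} [Group G] {m : ℕ}
    (σ : G →* Matrix.unitaryGroup (Fin m) ℂ) : Prop :=
  ∀ W : Submodule ℂ (Fin m → ℂ),
    (∀ g : G, ∀ v ∈ W, (σ g : Matrix (Fin m) (Fin m) ℂ).mulVec v ∈ W) → W = ⊥ ∨ W = ⊤

/-- A representation of `N` has finite `H`-orbit if the conjugates `σ^h`, `h ∈ H`, fall into
finitely many unitary equivalence classes. -/
def HasFiniteHOrbit {G : Type u} [Group G] {N : Subgroup G} (hN : N.Normal) (H : Subgroup G)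
    {m : ℕ} (σ : N →* Matrix.unitaryGroup (Fin m) ℂ) : Prop :=
  ∃ S : Finset (N →* Matrix.unitaryGroup (Fin m) ℂ),
    ∀ h ∈ H, ∃ τ ∈ S, UnitarilyEquiv (conjRep hN σ h) τ

/-- `(K, β)` is a Bohr compactification of `G`. -/
def IsBohrCompactification (G : Type u) [Group G] [TopologicalSpace G]
    (K : Type v) [Group K] [TopologicalSpace K] [IsTopologicalGroup K] [CompactSpace K]
    [T2Space K] (β : G →* K) : Prop :=
  Continuous β ∧ DenseRange β ∧
    ∀ (L : Type w) [Group L] [TopologicalSpace L] [IsTopologicalGroup L] [CompactSpace L]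
      [T2Space L] (α : G →* L), Continuous α →
        ∃ α' : K →* L, Continuous α' ∧ α = α'.comp β

/-- `(K, α)` is a profinite completion of `G`. -/
def IsProfiniteCompletion (G : Type u) [Group G] [TopologicalSpace G]
    (K : Type v) [Group K] [TopologicalSpace K] [IsTopologicalGroup K] [CompactSpace K]
    [T2Space K] [TotallyDisconnectedSpace K] (α : G →* K) : Prop :=
  Continuous α ∧ DenseRange α ∧
    ∀ (L : Type w) [Group L] [TopologicalSpace L] [IsTopologicalGroup L] [CompactSpace L]
      [T2Space L] [TotallyDisconnectedSpace L] (γ : G →* L), Continuous γ →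
        ∃ γ' : K →* L, Continuous γ' ∧ γ = γ'.comp α
/-- The restricted direct product `⊕_{h ∈ H} Λ`: finitely supported functions `H → Λ`. -/
def restrictedProduct (H : Type u) (Λ : Type v) [Group Λ] : Subgroup (H → Λ) where
  carrier := {f | (Function.mulSupport f).Finite}
  one_mem' := by simp
  mul_mem' := by
    intro f g hf hg
    exact Set.Finite.subset (hf.union hg) (Function.mulSupport_mul f g)
  inv_mem' := by
    intro f hf
    simpa using hf

/-- The shift of a finitely supported function: `(h · f)(h') = f (h⁻¹ h')`. -/
def shiftEquiv (Λ : Type v) (H : Type u) [Group Λ] [Group H] (h : H) :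
    restrictedProduct H Λ ≃* restrictedProduct H Λ where
  toFun f := ⟨fun h' => (f : H → Λ) (h⁻¹ * h'), by
    refine Set.Finite.subset (f.2.image (h * ·)) ?_
    intro h' hh'
    exact ⟨h⁻¹ * h', hh', by group⟩⟩
  invFun f := ⟨fun h' => (f : H → Λ) (h * h'), by
    refine Set.Finite.subset (f.2.image (h⁻¹ * ·)) ?_
    intro h' hh'
    exact ⟨h * h', hh', by group⟩⟩
  left_inv f := by ext h'; simp
  right_inv f := by ext h'; simp
  map_mul' f g := by ext h'; simp [Subgroup.coe_mul]

/-- The shift action of `H` on `⊕_{h ∈ H} Λ`. -/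
def shiftAut (Λ : Type v) (H : Type u) [Group Λ] [Group H] :
    H →* MulAut (restrictedProduct H Λ) where
  toFun h := shiftEquiv Λ H h
  map_one' := by
    ext f h'
    simp [shiftEquiv]
  map_mul' h₁ h₂ := by
    ext f h'
    simp [shiftEquiv, mul_assoc]

/-- The wreath product `Λ ≀ H`. -/
def Wreath (Λ : Type v) (H : Type u) [Group Λ] [Group H] : Type (max u v) :=
  restrictedProduct H Λ ⋊[shiftAut Λ H] H

instance (Λ : Type v) (H : Type u) [Group Λ] [Group H] : Group (Wreath Λ H) :=
  inferInstanceAs (Group (restrictedProduct H Λ ⋊[shiftAut Λ H] H))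
/-- A discrete group is maximally almost periodic if its finite-dimensional unitary
representations separate points. -/
def IsMAPGroup (G : Type u) [Group G] : Prop :=
  ∀ g : G, g ≠ 1 → ∃ (n : ℕ), 1 ≤ n ∧
    ∃ π : G →* Matrix.unitaryGroup (Fin n) ℂ, π g ≠ 1

/-- A discrete group is residually finite if every nontrivial element is sent to a nontrivial
element by some homomorphism onto a finite group. -/
def IsRFGroup (G : Type u) [Group G] : Prop :=
  ∀ g : G, g ≠ 1 → ∃ (F : Type) (_ : Group F) (_ : Finite F) (π : G →* F),
    Function.Surjective π ∧ π g ≠ 1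


/-!
Necessity. `Λ` embeds in `Λ ≀ H`. For `h ≠ 1` pick a unitary representation `π` that separates
`δ₁(a)` from `δₕ(a)`. The unitaries `Tₖ = π(δₖ(a))` commute and are semisimple, so they have
finitely many joint eigencharacters `χ : H → ℂ` and the joint eigenspaces span. Conjugation by
`π(H)` permutes these characters, and `h` moves one of them because `Tₕ ≠ T₁`. So the action of
`H` on this finite set detects `h`, and `H` is residually finite. If `H` is infinite, compactness
of the unitary group gives `kⱼ ≠ 1` with `π(kⱼ) → 1`. Since `δ₁(a)` commutes with
`δ_{kⱼ}(b) = kⱼ δ₁(b) kⱼ⁻¹`, passing to the limit shows that `π(δ₁ a)` commutes with `π(δ₁ b)`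
for every `π`, so `Λ` is abelian.

Sufficiency. An element outside the base group is detected through a finite quotient of `H`.
A nontrivial `f` in the base group is detected by a representation induced from
`(⊕ Λ) ⋊ ker q` for some finite quotient `q : H → F`. On the `x`-th block the base group acts
through a representation of `Λ`, composed with `f ↦ f x` when `H` is finite (take `q = id`), or
with `f ↦ ∏_{q y = x} f y` when `Λ` is abelian and `q` is injective on the support of `f`.
-/

theorem LinearIsometry.isSemisimple {𝕜 E : Type*} [RCLike 𝕜] [NormedAddCommGroup E]
    [InnerProductSpace 𝕜 E] [FiniteDimensional 𝕜 E] (U : E →ₗᵢ[𝕜] E) :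
    Module.End.IsSemisimple U.toLinearMap := by
  refine Module.End.isSemisimple_iff.mpr fun p hp => ⟨pᗮ, ?_, Submodule.isCompl_orthogonal p⟩
  rw [Module.End.mem_invtSubmodule] at hp ⊢
  intro y hy
  rw [Submodule.mem_comap, Submodule.mem_orthogonal]
  have hsurj : Function.Surjective (U.toLinearMap.restrict hp) :=
    LinearMap.injective_iff_surjective.mp fun a b hab => Subtype.ext (U.injective congr(($hab).1))
  intro x hx
  obtain ⟨x', hx'⟩ := hsurj ⟨x, hx⟩
  obtain rfl : U x' = x := congrArg Subtype.val hx'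
  exact (U.inner_map_map x' y).trans ((Submodule.mem_orthogonal p y).mp hy x' x'.2)

namespace Matrix

section Unitary

variable {𝕜 n : Type*} [RCLike 𝕜] [Fintype n] [DecidableEq n]

theorem norm_toEuclideanLin_of_mem_unitaryGroup {U : Matrix n n 𝕜}
    (hU : U ∈ unitaryGroup n 𝕜) (x : EuclideanSpace 𝕜 n) : ‖toEuclideanLin U x‖ = ‖x‖ :=
  ContinuousLinearMap.norm_map_of_mem_unitary
    (Unitary.map_mem (toEuclideanCLM (n := n) (𝕜 := 𝕜)) hU) x

theorem isSemisimple_toEuclideanLin {U : Matrix n n 𝕜} (hU : U ∈ unitaryGroup n 𝕜) :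
    Module.End.IsSemisimple (toEuclideanLin U) :=
  LinearIsometry.isSemisimple ⟨toEuclideanLin U, norm_toEuclideanLin_of_mem_unitaryGroup hU⟩

theorem isCompact_unitaryGroup : IsCompact (unitaryGroup n 𝕜 : Set (Matrix n n 𝕜)) := by
  have hbox :
      IsCompact (Set.univ.pi fun _ : n => Set.univ.pi fun _ : n => Metric.closedBall (0 : 𝕜) 1) :=
    isCompact_univ_pi fun _ => isCompact_univ_pi fun _ => isCompact_closedBall 0 1
  exact IsCompact.of_isClosed_subset (X := Matrix n n 𝕜) hbox isClosed_unitary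
    fun _ hU i _ j _ => mem_closedBall_zero_iff.mpr (entry_norm_bound_of_unitary hU i j)

instance unitaryGroup.compactSpace : CompactSpace (unitaryGroup n 𝕜) :=
  isCompact_iff_compactSpace.mp isCompact_unitaryGroup

instance unitaryGroup.firstCountableTopology : FirstCountableTopology (unitaryGroup n 𝕜) :=
  TopologicalSpace.firstCountableTopology_induced _ (n → n → 𝕜) Subtype.val

end Unitary

section PermBlock

variable {m o α : Type*} [Fintype m] [DecidableEq m] [Fintype o] [DecidableEq o] [CommRing α]
  [StarRing α]

def permUnitaryHom : Equiv.Perm m →* unitaryGroup m α :=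
  (permMatrixHom (R := α)).codRestrict _ fun σ => by
    rw [mem_unitaryGroup_iff', star_eq_conjTranspose]
    simp [permMatrixHom_apply, ← permMatrix_mul]

theorem coe_permUnitaryHom (σ : Equiv.Perm m) :
    (permUnitaryHom (α := α) σ : Matrix m m α) = σ⁻¹.permMatrix α := rfl

theorem permUnitaryHom_injective [Nontrivial α] :
    Function.Injective (permUnitaryHom : Equiv.Perm m → unitaryGroup m α) := by
  intro σ τ h
  have := PEquiv.toMatrix_injective (congrArg Subtype.val h)
  exact inv_injective (Equiv.ext fun x => by simpa using DFunLike.congr_fun this x)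

def blockDiagonalUnitaryHom : (o → unitaryGroup m α) →* unitaryGroup (m × o) α where
  toFun U := ⟨blockDiagonal fun x => U x, by
    have hU : ∀ x, (U x : Matrix m m α)ᴴ * U x = 1 := fun x => (U x).2.1
    rw [mem_unitaryGroup_iff', star_eq_conjTranspose, blockDiagonal_conjTranspose,
      ← blockDiagonal_mul]
    simp only [hU]
    exact blockDiagonal_one⟩
  map_one' := Subtype.ext blockDiagonal_one
  map_mul' U V := Subtype.ext
    (blockDiagonal_mul (fun x => (U x : Matrix m m α)) fun x => (V x : Matrix m m α))

theorem coe_blockDiagonalUnitaryHom (U : o → unitaryGroup m α) :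
    (blockDiagonalUnitaryHom U : Matrix (m × o) (m × o) α) = blockDiagonal fun x => U x := rfl

theorem blockDiagonalUnitaryHom_injective :
    Function.Injective
      (blockDiagonalUnitaryHom : (o → unitaryGroup m α) → unitaryGroup (m × o) α) :=
  fun U V h => funext fun x => Subtype.ext <| congr_fun (blockDiagonal_injective (by
    simpa only [coe_blockDiagonalUnitaryHom] using congrArg Subtype.val h)) x

omit [StarRing α] in
theorem permMatrix_mul_blockDiagonal_mul (τ : Equiv.Perm o) (B : o → Matrix m m α) :
    Equiv.Perm.permMatrix α ((Equiv.prodCongr (Equiv.refl m) τ : Equiv.Perm (m × o))⁻¹) *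
      blockDiagonal B * Equiv.Perm.permMatrix α (Equiv.prodCongr (Equiv.refl m) τ) =
      blockDiagonal fun x => B (τ⁻¹ x) := by
  rw [PEquiv.toMatrix_toPEquiv_mul, PEquiv.mul_toMatrix_toPEquiv]
  ext ⟨i, x⟩ ⟨j, y⟩
  simp [blockDiagonal_apply]

end PermBlock

end Matrix

def Equiv.Perm.prodShiftHom (m F : Type*) [Group F] : F →* Equiv.Perm (m × F) where
  toFun c := Equiv.prodCongr (Equiv.refl m) (MulAction.toPerm c)
  map_one' := by ext <;> simp
  map_mul' c d := by ext <;> simp [mul_assoc]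

theorem Equiv.Perm.prodShiftHom_apply (m : Type*) {F : Type*} [Group F] (c : F) :
    prodShiftHom m F c = Equiv.prodCongr (Equiv.refl m) (MulAction.toPerm c) := rfl

namespace Module.End

variable {ι K V : Type*} [Field K] [AddCommGroup V] [Module K V]

def jointEigenspace (T : ι → End K V) (χ : ι → K) : Submodule K V :=
  ⨅ i, (T i).eigenspace (χ i)

variable {T : ι → End K V}

theorem mem_jointEigenspace {χ : ι → K} {v : V} :
    v ∈ jointEigenspace T χ ↔ ∀ i, T i v = χ i • v := by
  simp [jointEigenspace]

theorem finite_setOf_jointEigenspace_ne_bot [FiniteDimensional K V]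
    (hT : ∀ i j, Commute (T i) (T j)) : {χ | jointEigenspace T χ ≠ ⊥}.Finite :=
  Submodule.finite_ne_bot_of_iSupIndep <|
    (independent_iInf_maxGenEigenspace_of_forall_mapsTo T
      fun i j _ => mapsTo_maxGenEigenspace_of_comm (hT j i) _).mono
    fun _ => iInf_mono fun _ => eigenspace_le_maxGenEigenspace

theorem iSup_jointEigenspace_eq_top [IsAlgClosed K] [FiniteDimensional K V]
    (hT : ∀ i j, Commute (T i) (T j)) (hss : ∀ i, (T i).IsSemisimple) :
    ⨆ χ, jointEigenspace T χ = ⊤ := by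
  simpa only [jointEigenspace, (hss _).isFinitelySemisimple.maxGenEigenspace_eq_eigenspace] using
    iSup_iInf_maxGenEigenspace_eq_top_of_forall_mapsTo T
      (fun i j _ => mapsTo_maxGenEigenspace_of_comm (hT j i) _)
      fun i => iSup_maxGenEigenspace_eq_top (T i)

theorem eq_of_forall_jointEigenspace_ne_bot (htop : ⨆ χ, jointEigenspace T χ = ⊤) {i j : ι}
    (h : ∀ χ, jointEigenspace T χ ≠ ⊥ → χ i = χ j) : T i = T j := by
  suffices ⊤ ≤ LinearMap.eqLocus (T i) (T j) from LinearMap.ext fun v => this trivial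
  rw [← htop]
  refine iSup_le fun χ v hv => ?_
  rcases eq_or_ne (jointEigenspace T χ) ⊥ with hχ | hχ
  · rw [hχ, Submodule.mem_bot] at hv
    simp [hv]
  · rw [mem_jointEigenspace] at hv
    rw [LinearMap.mem_eqLocus, hv, hv, h χ hχ]

theorem jointEigenspace_comp_symm_ne_bot {P : End K V} (hP : Function.Injective P)
    {σ : ι ≃ ι} (hPT : ∀ i, P * T i = T (σ i) * P) {χ : ι → K}
    (hχ : jointEigenspace T χ ≠ ⊥) : jointEigenspace T (χ ∘ σ.symm) ≠ ⊥ := by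
  obtain ⟨v, hv, hv0⟩ := Submodule.ne_bot_iff _ |>.mp hχ
  refine Submodule.ne_bot_iff _ |>.mpr ⟨P v, mem_jointEigenspace.mpr fun j => ?_,
    (map_ne_zero_iff P hP).mpr hv0⟩
  have hPv := congr($(hPT (σ.symm j)) v)
  simp only [mul_apply, Equiv.apply_symm_apply] at hPv
  rw [← hPv, mem_jointEigenspace.mp hv, map_smul, Function.comp_apply]

attribute [local instance] arrowAction in
theorem exists_finiteIndex_forall_smul_eq {G : Type*} [Group G] [MulAction G ι] [IsAlgClosed K]
    [FiniteDimensional K V] (hT : ∀ i j, Commute (T i) (T j)) (hss : ∀ i, (T i).IsSemisimple)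
    (hP : ∀ g : G, ∃ P : End K V, Function.Injective P ∧ ∀ i, P * T i = T (g • i) * P) :
    ∃ N : Subgroup G, N.FiniteIndex ∧ ∀ g ∈ N, ∀ i, T (g • i) = T i := by
  let X : SubMulAction G (ι → K) :=
    { carrier := {χ | jointEigenspace T χ ≠ ⊥}
      smul_mem' := fun g χ hχ => by
        obtain ⟨P, hP, hPT⟩ := hP g
        exact jointEigenspace_comp_symm_ne_bot hP (σ := MulAction.toPerm g) hPT hχ }
  have : Finite X := (finite_setOf_jointEigenspace_ne_bot hT).to_subtype
  refine ⟨(MulAction.toPermHom G X).ker, Subgroup.finiteIndex_ker _, fun g hg i => ?_⟩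
  refine eq_of_forall_jointEigenspace_ne_bot (iSup_jointEigenspace_eq_top hT hss) fun χ hχ => ?_
  have hfix : g • χ = χ := congr_arg Subtype.val (Equiv.ext_iff.mp hg ⟨χ, hχ⟩)
  calc χ (g • i) = (g • χ) (g • i) := by rw [hfix]
    _ = χ i := congrArg χ (inv_smul_smul g i)

end Module.End

section CompactGroup

open Filter Topology

variable {K : Type*} [Group K] [TopologicalSpace K] [IsTopologicalGroup K]

theorem exists_tendsto_one_of_infinite {G : Type*} [Group G] [Infinite G] [CompactSpace K]
    [FirstCountableTopology K] (f : G →* K) :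
    ∃ k : ℕ → G, (∀ n, k n ≠ 1) ∧ Tendsto (fun n => f (k n)) atTop (𝓝 1) := by
  let e := Infinite.natEmbedding G
  obtain ⟨z, φ, hφ, hz⟩ := CompactSpace.tendsto_subseq fun n => f (e n)
  refine ⟨fun n => (e (φ n))⁻¹ * e (φ (n + 1)), fun n h => ?_, ?_⟩
  · exact (hφ n.lt_succ_self).ne (e.injective (inv_mul_eq_one.mp h))
  · have hz' : Tendsto (fun n => f (e (φ (n + 1)))) atTop (𝓝 z) :=
      hz.comp (tendsto_add_atTop_nat 1)
    simpa using hz.inv.mul hz'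

theorem commute_of_tendsto_conj [T2Space K] {x y : K} {u : ℕ → K} (hu : Tendsto u atTop (𝓝 1))
    (h : ∀ n, Commute x (u n * y * (u n)⁻¹)) : Commute x y := by
  have hclosed : IsClosed {z : K | Commute x (z * y * z⁻¹)} :=
    isClosed_eq (by fun_prop) (by fun_prop)
  simpa using hclosed.mem_of_tendsto hu (Eventually.of_forall h)

end CompactGroup

section UnitarilySeparated

variable {G G' : Type*} [Group G] [Group G']

def UnitarilySeparated (g : G) : Prop :=
  ∃ n, 1 ≤ n ∧ ∃ π : G →* Matrix.unitaryGroup (Fin n) ℂ, π g ≠ 1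

theorem UnitarilySeparated.of_map {g : G} (f : G →* G') (h : UnitarilySeparated (f g)) :
    UnitarilySeparated g := by
  obtain ⟨n, hn, π, hπ⟩ := h
  exact ⟨n, hn, π.comp f, hπ⟩

theorem unitarilySeparated_of_unitaryGroup {κ : Type*} [Fintype κ] [DecidableEq κ] [Nonempty κ]
    {g : G} (π : G →* Matrix.unitaryGroup κ ℂ) (hπ : π g ≠ 1) : UnitarilySeparated g := by
  let e := Fintype.equivFin κ
  let ρ : Matrix κ κ ℂ ≃⋆* Matrix (Fin (Fintype.card κ)) (Fin (Fintype.card κ)) ℂ :=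
    { Matrix.reindexAlgEquiv ℂ ℂ e with
      map_star' := fun M => (Matrix.conjTranspose_reindex e e M).symm }
  let ψ := (Unitary.mapEquiv ρ).toMulEquiv
  exact ⟨Fintype.card κ, Fintype.card_pos, ψ.toMonoidHom.comp π,
    (map_ne_one_iff ψ ψ.injective).mpr hπ⟩

theorem unitarilySeparated_of_finite [Finite G] {g : G} (hg : g ≠ 1) : UnitarilySeparated g := by
  classical
  have := Fintype.ofFinite G
  refine unitarilySeparated_of_unitaryGroup
    (Matrix.permUnitaryHom.comp (MulAction.toPermHom G G)) ?_
  rw [MonoidHom.comp_apply, map_ne_one_iff _ Matrix.permUnitaryHom_injective]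
  exact fun h => hg (by simpa using congr(($h) 1))

theorem isMAPGroup_of_injective {f : G →* G'} (hf : Function.Injective f) (h : IsMAPGroup G') :
    IsMAPGroup G := fun g hg =>
  UnitarilySeparated.of_map f (h (f g) ((map_ne_one_iff f hf).mpr hg))

end UnitarilySeparated

section ResiduallyFinite

variable {G : Type*} [Group G]

theorem isRFGroup_iff_residuallyFinite : IsRFGroup G ↔ Group.ResiduallyFinite G := by
  refine ⟨fun h => Group.residuallyFinite_of_forall_exists_finite_monoidHom fun g hg => ?_,
    fun h g hg => ?_⟩
  · obtain ⟨F, iF, hF, π, -, hπ⟩ := h g hg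
    exact ⟨F, iF, hF, π, hπ⟩
  · obtain ⟨N, hgN⟩ := Group.exists_finiteIndexNormalSubgroup_notMem g hg
    let ψ : G →* Equiv.Perm (Fin (Nat.card (G ⧸ N.toSubgroup))) :=
      (Finite.equivFin _).permCongrHom.toMonoidHom.comp (MulAction.toPermHom G (G ⧸ N.toSubgroup))
    refine ⟨ψ.range, inferInstance, inferInstance, ψ.rangeRestrict, ψ.rangeRestrict_surjective,
      fun h1 => hgN ?_⟩
    have hψ : MulAction.toPermHom G (G ⧸ N.toSubgroup) g = 1 :=
      (map_eq_one_iff _ (Finite.equivFin _).permCongrHom.injective).mp congr(($h1).1)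
    have hg : g • ((1 : G) : G ⧸ N.toSubgroup) = ((1 : G) : G ⧸ N.toSubgroup) :=
      congr(($hψ) ((1 : G) : G ⧸ N.toSubgroup))
    rwa [MulAction.Quotient.smul_mk, smul_eq_mul, mul_one, QuotientGroup.mk_one,
      QuotientGroup.eq_one_iff] at hg

theorem Group.exists_normal_finiteIndex_injOn [Group.ResiduallyFinite G] {S : Set G}
    (hS : S.Finite) :
    ∃ N : Subgroup G, N.Normal ∧ N.FiniteIndex ∧ S.InjOn (QuotientGroup.mk : G → G ⧸ N) := by
  let P := {p : G × G // p ∈ S ×ˢ S ∧ p.1 ≠ p.2}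
  have : Finite P := ((hS.prod hS).subset fun _ hp => hp.1).to_subtype
  have hP (p : P) : p.1.1⁻¹ * p.1.2 ≠ 1 := fun h => p.2.2 (inv_mul_eq_one.mp h)
  choose K hK using fun p : P => Group.exists_finiteIndexNormalSubgroup_notMem _ (hP p)
  refine ⟨⨅ p, (K p).toSubgroup, Subgroup.normal_iInf_normal fun _ => inferInstance,
    Subgroup.finiteIndex_iInf fun _ => inferInstance, fun x hx y hy hxy => ?_⟩
  by_contra hne
  exact hK ⟨(x, y), ⟨hx, hy⟩, hne⟩ (Subgroup.mem_iInf.mp (QuotientGroup.eq.mp hxy) _)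

end ResiduallyFinite

namespace restrictedProduct

variable {H Λ : Type*}

section Group

variable [Group Λ]

theorem finite_mulSupport (f : restrictedProduct H Λ) :
    (Function.mulSupport (f : H → Λ)).Finite :=
  f.2

theorem exists_apply_ne_one {f : restrictedProduct H Λ} (hf : f ≠ 1) : ∃ y, (f : H → Λ) y ≠ 1 := by
  by_contra! h
  exact hf (Subtype.ext (funext h))

variable [DecidableEq H]

def mulSingle (k : H) : Λ →* restrictedProduct H Λ :=
  (MonoidHom.mulSingle (fun _ => Λ) k).codRestrict _ fun _ =>
    (Set.finite_singleton k).subset Pi.mulSupport_mulSingle_subset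

theorem coe_mulSingle (k : H) (x : Λ) : (mulSingle k x : H → Λ) = Pi.mulSingle k x := rfl

theorem mulSingle_injective (k : H) :
    Function.Injective (mulSingle k : Λ → restrictedProduct H Λ) :=
  fun _ _ h => Pi.mulSingle_injective k congr(($h).1)

theorem mulSingle_ne_mulSingle {k l : H} (hkl : k ≠ l) {x : Λ} (hx : x ≠ 1) :
    mulSingle k x ≠ mulSingle l x := fun h => by
  simpa [coe_mulSingle, hkl, hx] using congr_fun congr(($h).1) k

theorem commute_mulSingle {k l : H} (hkl : k ≠ l) (x y : Λ) :
    Commute (mulSingle k x) (mulSingle l y) :=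
  Subtype.ext (Pi.mulSingle_commute (f := fun _ => Λ) hkl x y)

theorem shiftAut_mulSingle [Group H] (h k : H) (x : Λ) :
    shiftAut Λ H h (mulSingle k x) = mulSingle (h * k) x := by
  ext h'
  simp [shiftAut, shiftEquiv, coe_mulSingle, Pi.mulSingle_apply, inv_mul_eq_iff_eq_mul]

end Group

section CommGroup

variable [CommGroup Λ] {F : Type*}

noncomputable def fiberProd (q : H → F) (x : F) : restrictedProduct H Λ →* Λ where
  toFun f := ∏ᶠ y ∈ q ⁻¹' {x}, (f : H → Λ) y
  map_one' := finprod_mem_one _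
  map_mul' f g := finprod_mem_mul_distrib' ((finite_mulSupport f).subset Set.inter_subset_right)
    ((finite_mulSupport g).subset Set.inter_subset_right)

theorem fiberProd_apply (q : H → F) (x : F) (f : restrictedProduct H Λ) :
    fiberProd q x f = ∏ᶠ y ∈ q ⁻¹' {x}, (f : H → Λ) y := rfl

theorem fiberProd_shiftAut [Group H] [Group F] (q : H →* F) (h : H) (x : F)
    (f : restrictedProduct H Λ) :
    fiberProd q x (shiftAut Λ H h f) = fiberProd q ((q h)⁻¹ * x) f := by
  have hfiber : ⇑q ⁻¹' {x} = (h * ·) '' (⇑q ⁻¹' {(q h)⁻¹ * x}) := by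
    ext y
    simp [Set.image_mul_left, eq_inv_mul_iff_mul_eq]
  rw [fiberProd_apply, fiberProd_apply, hfiber, finprod_mem_image (mul_right_injective h).injOn]
  simp [shiftAut, shiftEquiv]

theorem fiberProd_apply_self {q : H → F} {f : restrictedProduct H Λ}
    (hq : (Function.mulSupport (f : H → Λ)).InjOn q) {y : H} (hy : (f : H → Λ) y ≠ 1) :
    fiberProd q (q y) f = (f : H → Λ) y := by
  have hfiber : q ⁻¹' {q y} ∩ Function.mulSupport (f : H → Λ) = {y} := by
    ext z
    refine ⟨fun hz => hq hz.2 hy hz.1, ?_⟩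
    rintro rfl
    exact ⟨rfl, hy⟩
  rw [fiberProd_apply, ← finprod_mem_inter_mulSupport, hfiber, finprod_mem_singleton]

end CommGroup

end restrictedProduct

namespace Wreath

open Matrix restrictedProduct

variable {Λ H : Type*} [Group Λ] [Group H]

def inl : restrictedProduct H Λ →* Wreath Λ H := SemidirectProduct.inl

def inr : H →* Wreath Λ H := SemidirectProduct.inr

def rightHom : Wreath Λ H →* H := SemidirectProduct.rightHom

theorem inl_injective : Function.Injective (inl : restrictedProduct H Λ → Wreath Λ H) :=
  SemidirectProduct.inl_injective

theorem inr_mul_inl_mul_inv (h : H) (f : restrictedProduct H Λ) :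
    inr h * inl f * (inr h)⁻¹ = inl (shiftAut Λ H h f) := by
  rw [← map_inv]
  exact (SemidirectProduct.inl_aut h f).symm

theorem inr_mul_inl_mulSingle [DecidableEq H] (h k : H) (x : Λ) :
    inr h * inl (mulSingle k x) = inl (mulSingle (h * k) x) * inr h := by
  rw [← shiftAut_mulSingle, ← inr_mul_inl_mul_inv, inv_mul_cancel_right]

theorem exists_inl_eq_of_rightHom_eq_one {w : Wreath Λ H} (hw : rightHom w = 1) :
    ∃ f, inl f = w :=
  (SemidirectProduct.range_inl_eq_ker_rightHom (φ := shiftAut Λ H)).ge hw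

theorem isMAPGroup_left (hMAP : IsMAPGroup (Wreath Λ H)) : IsMAPGroup Λ := by
  classical
  exact isMAPGroup_of_injective (f := inl.comp (mulSingle 1))
    (inl_injective.comp (mulSingle_injective 1)) hMAP

theorem residuallyFinite_right [Nontrivial Λ] (hMAP : IsMAPGroup (Wreath Λ H)) :
    Group.ResiduallyFinite H := by
  classical
  obtain ⟨a, ha⟩ := exists_ne (1 : Λ)
  refine Group.residuallyFinite_iff_exists_finiteIndex.mpr fun h₀ hh₀ => ?_
  have hw : inl (mulSingle 1 a) * (inl (mulSingle h₀ a))⁻¹ ≠ (1 : Wreath Λ H) :=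
    mul_inv_eq_one.not.mpr (inl_injective.ne (mulSingle_ne_mulSingle hh₀.symm ha))
  obtain ⟨m, -, π, hπ⟩ := hMAP _ hw
  let Φ : unitaryGroup (Fin m) ℂ →* Module.End ℂ (EuclideanSpace ℂ (Fin m)) :=
    (toLpLinAlgEquiv 2).toMonoidHom.comp (unitaryGroup (Fin m) ℂ).subtype
  have hΦ : Function.Injective Φ := (toLpLinAlgEquiv 2).injective.comp Subtype.val_injective
  let T : H → Module.End ℂ (EuclideanSpace ℂ (Fin m)) := fun k => Φ (π (inl (mulSingle k a)))
  have hcomm : ∀ i j, Commute (T i) (T j) := by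
    intro i j
    rcases eq_or_ne i j with rfl | hij
    · rfl
    · exact (((commute_mulSingle hij a a).map inl).map π).map Φ
  have hss : ∀ i, (T i).IsSemisimple := fun i =>
    isSemisimple_toEuclideanLin (π (inl (mulSingle i a))).2
  have hP : ∀ h : H, ∃ P : Module.End ℂ (EuclideanSpace ℂ (Fin m)), Function.Injective P ∧
      ∀ i, P * T i = T (h • i) * P := fun h =>
    ⟨Φ (π (inr h)), ((Module.End.isUnit_iff _).mp ((Group.isUnit _).map Φ)).injective, fun i => by
      simp only [T, smul_eq_mul, ← map_mul, inr_mul_inl_mulSingle]⟩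
  obtain ⟨N, hN, hNT⟩ := Module.End.exists_finiteIndex_forall_smul_eq hcomm hss hP
  refine ⟨N, hN, fun hmem => hπ ?_⟩
  have hT : T h₀ = T 1 := by simpa only [smul_eq_mul, mul_one] using hNT h₀ hmem 1
  rw [map_mul, map_inv, hΦ hT, mul_inv_cancel]

open scoped commutatorElement in
theorem commute_of_infinite [Infinite H] (hMAP : IsMAPGroup (Wreath Λ H)) (a b : Λ) :
    Commute a b := by
  classical
  let ι : Λ →* Wreath Λ H := inl.comp (mulSingle 1)
  have hι : Function.Injective ι := inl_injective.comp (mulSingle_injective 1)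
  by_contra hab
  obtain ⟨m, -, π, hπ⟩ := hMAP (ι ⁅a, b⁆) <| (map_ne_one_iff ι hι).mpr
    (mt commutatorElement_eq_one_iff_commute.mp hab)
  obtain ⟨k, hk1, hk⟩ := exists_tendsto_one_of_infinite (π.comp inr)
  apply hπ
  rw [map_commutatorElement, map_commutatorElement, commutatorElement_eq_one_iff_commute]
  refine commute_of_tendsto_conj hk fun n => ?_
  have hconj := inr_mul_inl_mul_inv (k n) (mulSingle 1 b)
  rw [shiftAut_mulSingle, mul_one] at hconj
  simp only [MonoidHom.comp_apply, ι]
  rw [← map_inv, ← map_mul, ← map_mul, hconj]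
  exact ((commute_mulSingle (hk1 n).symm a b).map inl).map π

section InducedRep

variable {F : Type*} [Group F] [Fintype F] [DecidableEq F] {n : ℕ}

def inducedRep (q : H →* F) (φ : F → restrictedProduct H Λ →* unitaryGroup (Fin n) ℂ)
    (hφ : ∀ h x f, φ x (shiftAut Λ H h f) = φ ((q h)⁻¹ * x) f) :
    Wreath Λ H →* unitaryGroup (Fin n × F) ℂ :=
  SemidirectProduct.lift (blockDiagonalUnitaryHom.comp (MonoidHom.pi φ))
    (permUnitaryHom.comp ((Equiv.Perm.prodShiftHom (Fin n) F).comp q)) fun h => by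
      ext f : 1
      apply Subtype.ext
      simp only [MonoidHom.comp_apply, MulEquiv.coe_toMonoidHom, MulAut.conj_apply]
      rw [← map_inv permUnitaryHom, Submonoid.coe_mul, Submonoid.coe_mul, coe_permUnitaryHom,
        coe_permUnitaryHom, inv_inv, coe_blockDiagonalUnitaryHom, coe_blockDiagonalUnitaryHom,
        Equiv.Perm.prodShiftHom_apply, permMatrix_mul_blockDiagonal_mul]
      simp [hφ]

theorem inducedRep_inl (q : H →* F) (φ : F → restrictedProduct H Λ →* unitaryGroup (Fin n) ℂ)
    (hφ : ∀ h x f, φ x (shiftAut Λ H h f) = φ ((q h)⁻¹ * x) f) (f : restrictedProduct H Λ) :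
    inducedRep q φ hφ (inl f) = blockDiagonalUnitaryHom fun x => φ x f :=
  SemidirectProduct.lift_inl _ _ _ f

end InducedRep

theorem unitarilySeparated_inl_of_equivariant {F : Type*} [Group F] [Finite F] (q : H →* F)
    (ρ : F → restrictedProduct H Λ →* Λ)
    (hρ : ∀ h x f, ρ x (shiftAut Λ H h f) = ρ ((q h)⁻¹ * x) f) (hΛ : IsMAPGroup Λ)
    {f : restrictedProduct H Λ} {x : F} (hx : ρ x f ≠ 1) :
    UnitarilySeparated (inl f : Wreath Λ H) := by
  classical
  have := Fintype.ofFinite F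
  obtain ⟨n, hn, π, hπ⟩ := hΛ _ hx
  have : Nonempty (Fin n) := ⟨⟨0, hn⟩⟩
  refine unitarilySeparated_of_unitaryGroup
    (inducedRep q (fun x => π.comp (ρ x)) fun h x f => by simp [hρ]) ?_
  rw [inducedRep_inl, map_ne_one_iff _ blockDiagonalUnitaryHom_injective]
  exact fun h => hπ (congr_fun h x)

theorem unitarilySeparated_inl_of_finite [Finite H] (hΛ : IsMAPGroup Λ)
    {f : restrictedProduct H Λ} (hf : f ≠ 1) : UnitarilySeparated (inl f : Wreath Λ H) := by
  obtain ⟨x, hx⟩ := exists_apply_ne_one hf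
  exact unitarilySeparated_inl_of_equivariant (MonoidHom.id H)
    (fun x => (Pi.evalMonoidHom _ x).comp (restrictedProduct H Λ).subtype) (fun _ _ _ => rfl) hΛ hx

theorem unitarilySeparated_inl_of_commGroup {Λ : Type*} [CommGroup Λ] [Group.ResiduallyFinite H]
    (hΛ : IsMAPGroup Λ) {f : restrictedProduct H Λ} (hf : f ≠ 1) :
    UnitarilySeparated (inl f : Wreath Λ H) := by
  obtain ⟨y, hy⟩ := exists_apply_ne_one hf
  obtain ⟨N, hN, hNfin, hinj⟩ := Group.exists_normal_finiteIndex_injOn (finite_mulSupport f)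
  exact unitarilySeparated_inl_of_equivariant (QuotientGroup.mk' N)
    (fiberProd (QuotientGroup.mk' N))
    (fiberProd_shiftAut _) hΛ (x := QuotientGroup.mk' N y)
    (by rwa [fiberProd_apply_self (q := QuotientGroup.mk' N) hinj hy])

theorem unitarilySeparated_of_rightHom_ne_one [Group.ResiduallyFinite H] {w : Wreath Λ H}
    (hw : rightHom w ≠ 1) : UnitarilySeparated w := by
  obtain ⟨N, hN⟩ := Group.exists_finiteIndexNormalSubgroup_notMem _ hw
  exact .of_map rightHom <| .of_map (QuotientGroup.mk' N.toSubgroup) <|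
    unitarilySeparated_of_finite (by
      rwa [ne_eq, QuotientGroup.mk'_apply, QuotientGroup.eq_one_iff,
        FiniteIndexNormalSubgroup.mem_toSubgroup_iff])

end Wreath

theorem wreath_map_iff_general (Λ : Type u) (H : Type v) [Group Λ] [Group H]
    [Nontrivial Λ] :
    IsMAPGroup (Wreath Λ H) ↔
      (IsMAPGroup Λ ∧ IsRFGroup H ∧ (Finite H ∨ ∀ a b : Λ, a * b = b * a)) := by
  rw [isRFGroup_iff_residuallyFinite]
  constructor
  · intro hMAP
    refine ⟨Wreath.isMAPGroup_left hMAP, Wreath.residuallyFinite_right hMAP, ?_⟩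
    rcases finite_or_infinite H with hH | hH
    · exact Or.inl hH
    · exact Or.inr (Wreath.commute_of_infinite hMAP)
  · rintro ⟨hΛ, hH, hfin⟩ w hw
    by_cases hr : Wreath.rightHom w = 1
    · obtain ⟨f, rfl⟩ := Wreath.exists_inl_eq_of_rightHom_eq_one hr
      have hf : f ≠ 1 := by
        rintro rfl
        exact hw (map_one _)
      rcases hfin with hH' | hcomm
      · exact Wreath.unitarilySeparated_inl_of_finite hΛ hf
      · let _ : CommGroup Λ := { mul_comm := hcomm }
        exact Wreath.unitarilySeparated_inl_of_commGroup hΛ hf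
    · exact Wreath.unitarilySeparated_of_rightHom_ne_one hr

theorem wreath_map_iff (Λ : Type u) (H : Type v) [Group Λ] [Group H]
    [Countable Λ] [Countable H] [Nontrivial Λ] :
    IsMAPGroup (Wreath Λ H) ↔
      (IsMAPGroup Λ ∧ IsRFGroup H ∧ (Finite H ∨ ∀ a b : Λ, a * b = b * a)) :=
  wreath_map_iff_general Λ H
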